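/- Let G be a group and c a left-invariant circular ordering of G. Then the semiconjugacy class S_c = {d ∈ CO(G) : rot_d(g) = rot_c(g) and τ_d(g,h) = τ_c(g,h) for all g,h ∈ G} is a compact subset of CO(G), and it is invariant under the right conjugation action of G on CO(G): for every d ∈ S_c and g ∈ G, the circular ordering d·g defined by (d·g)(g₁,g₂,g₃) = d(g₁g⁻¹, g₂g⁻¹, g₃g⁻¹) also lies in S_c. -/

import Mathlib

/-!
Since `f_c` takes values in `{0, 1}`, the sequence `n ↦ [hⁿ]_c` is quasi-additive with defect
at most `1`, so by Fekete's lemma `[hⁿ]_c / n` converges to `r̃ot_c(h)`, at distance at most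
`1 / n` whatever `c` is. Each `[hⁿ]_c` depends on finitely many values of `c`, hence `r̃ot_c(h)`,
`rot_c` and `τ_c` depend continuously on `c`, and `S_c` is closed in the compact space `CO(G)`.

For the action, `(a, z) ↦ (g a g⁻¹, z)` identifies `G̃_{d·g}` with `G̃_d`, so
`rot_{d·g}(a) = rot_d(g a g⁻¹)` and `τ_{d·g}(a, b) = τ_d(g a g⁻¹, g b g⁻¹)`. Conjugating by a lift
of `g` moves `[·]_d` by a bounded amount, so translation numbers are conjugation invariant in
`G̃_d`, which gives back `rot_d(a)` and `τ_d(a, b)`.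
-/

namespace Paper

variable {G : Type*} [Group G]

/-- A left-invariant circular ordering of a group `G`, as a function `G³ → {0, ±1} ⊆ ℤ`. -/
def IsCircOrd (c : G → G → G → ℤ) : Prop :=
  (∀ g₁ g₂ g₃ : G, c g₁ g₂ g₃ = 0 ↔ (g₁ = g₂ ∨ g₁ = g₃ ∨ g₂ = g₃)) ∧
  (∀ g₁ g₂ g₃ : G, c g₁ g₂ g₃ = 0 ∨ c g₁ g₂ g₃ = 1 ∨ c g₁ g₂ g₃ = -1) ∧
  (∀ g₁ g₂ g₃ g₄ : G, c g₂ g₃ g₄ - c g₁ g₃ g₄ + c g₁ g₂ g₄ - c g₁ g₂ g₃ = 0) ∧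
  (∀ g g₁ g₂ g₃ : G, c (g*g₁) (g*g₂) (g*g₃) = c g₁ g₂ g₃)

/-- The space CO(G) of circular orderings, topologized as a subspace of `ℤ^{G³}`
(all relevant values lie in the discrete set `{0,±1}`, and `ℤ` carries the discrete
topology, so this is the subspace topology from the product topology on `{0,±1}^{G³}`). -/
abbrev CircOrd (G : Type*) [Group G] := {c : G → G → G → ℤ // IsCircOrd c}

open Classical in
/-- The cocycle `f_c`: `f_c(g,h) = 0` if `g = 1` or `h = 1` or `c(1,g,gh) = 1`,
and `f_c(g,h) = 1` otherwise (i.e. when `gh = 1 ≠ g`, or `c(1,gh,g) = 1`). -/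
noncomputable def fc (c : G → G → G → ℤ) (g h : G) : ℤ :=
  if g = 1 ∨ h = 1 ∨ c 1 g (g*h) = 1 then 0 else 1

/-- Multiplication in the central extension `G̃_c = G × ℤ`:
`(g,n)(h,m) = (gh, n+m+f_c(g,h))`. -/
noncomputable def liftMul (c : G → G → G → ℤ) (x y : G × ℤ) : G × ℤ :=
  (x.1 * y.1, x.2 + y.2 + fc c x.1 y.1)

/-- Powers (with natural number exponents) in `G̃_c`. -/
noncomputable def liftPow (c : G → G → G → ℤ) (x : G × ℤ) : ℕ → G × ℤ
  | 0 => (1, 0)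
  | n+1 => liftMul c (liftPow c x n) x

/-- `[h]_c`: the unique integer `k` with `z_c^k ≤_c h <_c z_c^{k+1}`, where `<_c` is the
left-ordering of `G̃_c` with positive cone `{(g,n) : n ≥ 0} ∖ {(1,0)}` and `z_c = (1,1)`.
Since `z_c^k = (1,k)` and `f_c(g,g⁻¹) = 1` for `g ≠ 1`, this is exactly the second
coordinate of `h`. -/
def liftFloor (h : G × ℤ) : ℤ := h.2

/-- The translation number `r̃ot_c(h)` of `h ∈ G̃_c`: the limit of `[hⁿ]_c / n`
(`limUnder` picks out the limit when it exists). -/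
noncomputable def rotTilde (c : G → G → G → ℤ) (h : G × ℤ) : ℝ :=
  Filter.limUnder Filter.atTop (fun n : ℕ => (liftFloor (liftPow c h n) : ℝ) / (n : ℝ))

/-- The rotation number `rot_c(g) ∈ ℝ/ℤ`, computed using the lift `(g,0) ∈ G̃_c`
(it is independent of the choice of lift). -/
noncomputable def rotc (c : G → G → G → ℤ) (g : G) : AddCircle (1:ℝ) :=
  ((rotTilde c (g, 0) : ℝ) : AddCircle (1:ℝ))

/-- `τ_c(g,h) = r̃ot_c(g̃h̃) − r̃ot_c(g̃) − r̃ot_c(h̃)`, computed using the lifts `(g,0)`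
and `(h,0)` (it is independent of the choice of lifts). -/
noncomputable def tauc (c : G → G → G → ℤ) (g h : G) : ℝ :=
  rotTilde c (liftMul c (g,0) (h,0)) - rotTilde c (g,0) - rotTilde c (h,0)

/-- A positive cone of a group `G`: `P · P ⊆ P` and `P ∪ P⁻¹ = G ∖ {1}`.
It determines a left-ordering by `g < h` iff `g⁻¹h ∈ P`. -/
def IsPositiveCone (P : Set G) : Prop :=
  (∀ a ∈ P, ∀ b ∈ P, a * b ∈ P) ∧ (P ∪ P⁻¹ = {g : G | g ≠ 1})

/-- The left-ordering determined by a positive cone. -/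
def coneLt (P : Set G) (a b : G) : Prop := a⁻¹ * b ∈ P

open Classical in
/-- The secret left-ordering `c_<` determined by a positive cone `P`:
`c_<(a,b,c) = sign σ` where `σ` is the permutation sorting `(a,b,c)` into increasing
order, i.e. `c_< = 1` on positively cyclically ordered triples, `-1` on negatively
cyclically ordered triples, and `0` when the entries are not all distinct. -/
noncomputable def circOfCone (P : Set G) : G → G → G → ℤ := fun a b c =>
  if (coneLt P a b ∧ coneLt P b c) ∨ (coneLt P b c ∧ coneLt P c a) ∨
      (coneLt P c a ∧ coneLt P a b) then 1
  else if (coneLt P c b ∧ coneLt P b a) ∨ (coneLt P b a ∧ coneLt P a c) ∨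
      (coneLt P a c ∧ coneLt P c b) then -1
  else 0

/-- A circular ordering is a *secret left-ordering* if it is `c_<` for some
left-ordering `<` of `G`. -/
def IsSecret (c : G → G → G → ℤ) : Prop := ∃ P : Set G, IsPositiveCone P ∧ c = circOfCone P

open Filter Topology

section QuasiAdditive

variable {u : ℕ → ℝ} {C : ℝ}

theorem quasiAdditive_mul_bounds (h0 : u 0 = 0) (hsuper : ∀ m n, u m + u n ≤ u (m + n))
    (hsub : ∀ m n, u (m + n) ≤ u m + u n + C) (n k : ℕ) :
    k * u n ≤ u (n * k) ∧ u (n * k) ≤ k * (u n + C) := by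
  induction k with
  | zero => simp [h0]
  | succ k ih =>
    rw [Nat.mul_succ]
    push_cast
    constructor <;> linarith [hsuper (n * k) n, hsub (n * k) n, ih.1, ih.2]

theorem exists_tendsto_div_of_quasiAdditive (h0 : u 0 = 0)
    (hsuper : ∀ m n, u m + u n ≤ u (m + n)) (hsub : ∀ m n, u (m + n) ≤ u m + u n + C) :
    ∃ L, Tendsto (fun n => u n / n) atTop (𝓝 L) ∧
      ∀ n ≠ 0, u n / n ≤ L ∧ L ≤ (u n + C) / n := by
  have hC : 0 ≤ C := by linarith [hsub 0 0]
  have hsubadd : Subadditive (fun n => u n + C) := fun m n => by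
    linarith [hsub m n]
  have hbdd : BddBelow (Set.range fun n : ℕ => (u n + C) / n) := by
    refine ⟨min 0 (u 1), ?_⟩
    rintro - ⟨n, rfl⟩
    rcases Nat.eq_zero_or_pos n with rfl | hn
    · simp
    · have hn' : (0 : ℝ) < n := by exact_mod_cast hn
      have hlow := (quasiAdditive_mul_bounds h0 hsuper hsub 1 n).1
      rw [one_mul] at hlow
      refine (min_le_right _ _).trans ?_
      rw [le_div_iff₀ hn']
      nlinarith
  have hlim : Tendsto (fun n : ℕ => u n / n) atTop (𝓝 hsubadd.lim) := by
    have := (hsubadd.tendsto_lim hbdd).sub (tendsto_const_div_atTop_nhds_zero_nat C)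
    rw [sub_zero] at this
    exact this.congr fun n => by simp only [add_div, add_sub_cancel_right]
  refine ⟨hsubadd.lim, hlim, fun n hn => ⟨?_, hsubadd.lim_le_div hbdd hn⟩⟩
  have hn' : (0 : ℝ) < n := by positivity
  have hmul : Tendsto (fun k : ℕ => n * k) atTop atTop :=
    tendsto_atTop_mono (fun k => Nat.le_mul_of_pos_left k (Nat.pos_of_ne_zero hn)) tendsto_id
  refine ge_of_tendsto (hlim.comp hmul) ?_
  filter_upwards [eventually_gt_atTop 0] with k hk
  have hk' : (0 : ℝ) < k := by exact_mod_cast hk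
  simp only [Function.comp_apply, Nat.cast_mul]
  rw [div_le_div_iff₀ hn' (by positivity)]
  nlinarith [(quasiAdditive_mul_bounds h0 hsuper hsub n k).1]

theorem tendsto_div_of_abs_sub_le {v : ℕ → ℝ} {L B : ℝ}
    (hu : Tendsto (fun n => u n / n) atTop (𝓝 L)) (h : ∀ n, |v n - u n| ≤ B) :
    Tendsto (fun n => v n / n) atTop (𝓝 L) := by
  have hdiff : Tendsto (fun n : ℕ => (v n - u n) / n) atTop (𝓝 0) := by
    refine squeeze_zero_norm (fun n => ?_) (tendsto_const_div_atTop_nhds_zero_nat B)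
    rw [Real.norm_eq_abs, abs_div, Nat.abs_cast]
    exact div_le_div_of_nonneg_right (h n) n.cast_nonneg
  simpa [sub_div] using hu.add hdiff

end QuasiAdditive

theorem continuous_of_abs_sub_le_div {X : Type*} [TopologicalSpace X] {F : ℕ → X → ℝ}
    {f : X → ℝ} {C : ℝ} (hF : ∀ n, Continuous (F n)) (h : ∀ n ≠ 0, ∀ x, |F n x - f x| ≤ C / n) :
    Continuous f := by
  refine TendstoUniformly.continuous (F := F) (p := atTop) ?_ (Eventually.of_forall hF).frequently
  rw [Metric.tendstoUniformly_iff]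
  intro ε hε
  filter_upwards [(tendsto_const_div_atTop_nhds_zero_nat C).eventually (gt_mem_nhds hε),
    eventually_ne_atTop 0] with n hn hn0 x
  rw [Real.dist_eq, abs_sub_comm]
  exact (h n hn0 x).trans_lt hn

open Classical in
noncomputable def cyclicDefect {α : Type*} (c : α → α → α → ℤ) (p q r : α) : ℤ :=
  if p = q ∨ q = r ∨ c p q r = 1 then 0 else 1

theorem cyclicDefect_cocycle {α : Type*} {c : α → α → α → ℤ}
    (hzero : ∀ p q r, c p q r = 0 ↔ (p = q ∨ p = r ∨ q = r))
    (hval : ∀ p q r, c p q r = 0 ∨ c p q r = 1 ∨ c p q r = -1)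
    (hcoc : ∀ p q r s, c q r s - c p r s + c p q s - c p q r = 0) (p q r s : α) :
    cyclicDefect c p q r + cyclicDefect c p r s = cyclicDefect c q r s + cyclicDefect c p q s := by
  have := hcoc p q r s
  have := hzero p q r; have := hzero p q s; have := hzero p r s; have := hzero q r s
  have := hval p q r; have := hval p q s; have := hval p r s; have := hval q r s
  clear hzero hval hcoc
  unfold cyclicDefect
  by_cases p = q <;> by_cases p = r <;> by_cases p = s <;> by_cases q = r <;> by_cases q = s <;>
    by_cases r = s <;> subst_vars <;> simp_all <;> split_ifs <;> omega

variable {c : G → G → G → ℤ}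

theorem fc_eq_cyclicDefect (g h : G) :
    fc c g h = cyclicDefect c 1 g (g * h) := by
  classical
  simp only [fc, cyclicDefect, left_eq_mul, eq_comm (a := g) (b := 1)]

theorem cyclicDefect_mul_left (hc : IsCircOrd c) (x p q r : G) :
    cyclicDefect c (x * p) (x * q) (x * r) = cyclicDefect c p q r := by
  classical
  simp only [cyclicDefect, mul_right_inj, hc.2.2.2]

theorem fc_cocycle (hc : IsCircOrd c) (x y z : G) :
    fc c x y + fc c (x * y) z = fc c y z + fc c x (y * z) := by
  have key := cyclicDefect_cocycle hc.1 hc.2.1 hc.2.2.1 1 x (x * y) (x * (y * z))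
  have htranslate := cyclicDefect_mul_left hc x 1 y (y * z)
  rw [mul_one] at htranslate
  rw [htranslate] at key
  simpa only [fc_eq_cyclicDefect, mul_assoc] using key

theorem fc_inv_comm (hc : IsCircOrd c) (g : G) : fc c g⁻¹ g = fc c g g⁻¹ := by
  classical
  have hdeg : ∀ h : G, c 1 h 1 ≠ 1 := fun h => by
    rw [(hc.1 1 h 1).2 (Or.inr (Or.inl rfl))]; decide
  simp only [fc, inv_mul_cancel, mul_inv_cancel, hdeg, inv_eq_one, or_false, or_self]

theorem fc_nonneg (g h : G) : 0 ≤ fc c g h := by unfold fc; split <;> norm_num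

theorem fc_le_one (g h : G) : fc c g h ≤ 1 := by unfold fc; split <;> norm_num

theorem liftMul_assoc (hc : IsCircOrd c) (x y z : G × ℤ) :
    liftMul c (liftMul c x y) z = liftMul c x (liftMul c y z) := by
  refine Prod.ext (mul_assoc _ _ _) ?_
  simp only [liftMul]
  linarith [fc_cocycle hc x.1 y.1 z.1]

theorem one_liftMul (x : G × ℤ) : liftMul c (1, 0) x = x := by simp [liftMul, fc]

theorem liftMul_one (x : G × ℤ) : liftMul c x (1, 0) = x := by simp [liftMul, fc]

theorem inv_liftMul (hc : IsCircOrd c) (x : G × ℤ) :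
    liftMul c (x.1⁻¹, -x.2 - fc c x.1 x.1⁻¹) x = (1, 0) := by
  refine Prod.ext (inv_mul_cancel _) ?_
  simp only [liftMul, fc_inv_comm hc]
  ring

def LiftGroup {c : G → G → G → ℤ} (_ : IsCircOrd c) : Type _ := G × ℤ

noncomputable instance (hc : IsCircOrd c) : Group (LiftGroup hc) where
  mul := liftMul c
  one := ((1 : G), (0 : ℤ))
  inv x := (x.1⁻¹, -x.2 - fc c x.1 x.1⁻¹)
  mul_assoc := liftMul_assoc hc
  one_mul := one_liftMul
  mul_one := liftMul_one
  inv_mul_cancel := inv_liftMul hc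

section LiftGroup

variable {hc : IsCircOrd c}

theorem LiftGroup.fst_mul (x y : LiftGroup hc) : (x * y).1 = x.1 * y.1 := rfl

theorem LiftGroup.snd_mul (x y : LiftGroup hc) : (x * y).2 = x.2 + y.2 + fc c x.1 y.1 := rfl

theorem liftPow_eq_pow (x : LiftGroup hc) (n : ℕ) : liftPow c x n = x ^ n := by
  induction n with
  | zero => rfl
  | succ n ih => rw [pow_succ, ← ih]; rfl

end LiftGroup

theorem liftPow_fst (x : G × ℤ) (n : ℕ) : (liftPow c x n).1 = x.1 ^ n := by
  induction n with
  | zero => simp [liftPow]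
  | succ n ih => simp [liftPow, liftMul, ih, pow_succ]

theorem liftPow_snd_add {hc : IsCircOrd c} (x : LiftGroup hc) (m n : ℕ) :
    (liftPow c x (m + n)).2 = (liftPow c x m).2 + (liftPow c x n).2 + fc c (x.1 ^ m) (x.1 ^ n) := by
  have hpow := liftPow_eq_pow x
  rw [hpow, hpow, hpow, pow_add, LiftGroup.snd_mul, ← hpow, ← hpow]
  exact congrArg _ (congrArg₂ (fc c) (liftPow_fst x m) (liftPow_fst x n))

theorem rotTilde_spec (hc : IsCircOrd c) (x : G × ℤ) :
    Tendsto (fun n : ℕ => ((liftPow c x n).2 : ℝ) / n) atTop (𝓝 (rotTilde c x)) ∧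
      ∀ n ≠ 0, ((liftPow c x n).2 : ℝ) / n ≤ rotTilde c x ∧
        rotTilde c x ≤ ((liftPow c x n).2 + 1) / n := by
  have hadd (m n : ℕ) : ((liftPow c x (m + n)).2 : ℝ)
      = (liftPow c x m).2 + (liftPow c x n).2 + fc c (x.1 ^ m) (x.1 ^ n) := by
    exact_mod_cast liftPow_snd_add (hc := hc) x m n
  have hfc (m n : ℕ) : (0 : ℝ) ≤ fc c (x.1 ^ m) (x.1 ^ n) ∧ (fc c (x.1 ^ m) (x.1 ^ n) : ℝ) ≤ 1 :=
    ⟨by exact_mod_cast fc_nonneg _ _, by exact_mod_cast fc_le_one _ _⟩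
  obtain ⟨L, hL, hbounds⟩ := exists_tendsto_div_of_quasiAdditive (C := 1)
    (u := fun n => ((liftPow c x n).2 : ℝ)) (by simp [liftPow])
    (fun m n => by linarith [hadd m n, hfc m n]) (fun m n => by linarith [hadd m n, hfc m n])
  obtain rfl : rotTilde c x = L := hL.limUnder_eq
  exact ⟨hL, hbounds⟩

theorem liftPow_snd_eq_add_snd (x : G × ℤ) (n : ℕ) :
    (liftPow c x n).2 = (liftPow c (x.1, 0) n).2 + n * x.2 := by
  induction n with
  | zero => simp [liftPow]
  | succ n ih =>
    simp only [liftPow, liftMul, ih, liftPow_fst]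
    push_cast; ring

theorem rotTilde_eq_add_snd (hc : IsCircOrd c) (x : G × ℤ) :
    rotTilde c x = rotTilde c (x.1, 0) + x.2 := by
  refine tendsto_nhds_unique (rotTilde_spec hc x).1 ?_
  refine ((rotTilde_spec hc (x.1, 0)).1.add_const (x.2 : ℝ)).congr' ?_
  filter_upwards [eventually_ne_atTop 0] with n hn
  rw [liftPow_snd_eq_add_snd x]
  push_cast
  field_simp

theorem rotTilde_conj (hc : IsCircOrd c) (t x : LiftGroup hc) :
    rotTilde c (t * x * t⁻¹) = rotTilde c x := by
  have hdefect (y : LiftGroup hc) : |(t * y * t⁻¹).2 - y.2| ≤ |t.2 + t⁻¹.2| + 2 := by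
    have h1 := fc_nonneg (c := c) t.1 y.1
    have h2 := fc_le_one (c := c) t.1 y.1
    have h3 := fc_nonneg (c := c) (t * y).1 t⁻¹.1
    have h4 := fc_le_one (c := c) (t * y).1 t⁻¹.1
    have h5 := le_abs_self (t.2 + t⁻¹.2)
    have h6 := neg_abs_le (t.2 + t⁻¹.2)
    rw [LiftGroup.snd_mul, LiftGroup.snd_mul, abs_le]
    constructor <;> linarith
  refine tendsto_nhds_unique (rotTilde_spec hc _).1 ?_
  refine tendsto_div_of_abs_sub_le (rotTilde_spec hc x).1 (B := |t.2 + t⁻¹.2| + 2) fun n => ?_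
  rw [liftPow_eq_pow, liftPow_eq_pow, conj_pow]
  exact_mod_cast hdefect _

theorem rotc_eq_rotTilde (hc : IsCircOrd c) (x : G × ℤ) :
    rotc c x.1 = (rotTilde c x : AddCircle (1 : ℝ)) := by
  have hsnd : ((x.2 : ℝ) : AddCircle (1 : ℝ)) = 0 :=
    (AddCircle.coe_eq_zero_iff (p := (1 : ℝ))).2 ⟨x.2, by simp⟩
  rw [rotTilde_eq_add_snd hc x, AddCircle.coe_add, hsnd, add_zero, rotc]

theorem tauc_eq_rotTilde (hc : IsCircOrd c) (x y : LiftGroup hc) :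
    tauc c x.1 y.1 = rotTilde c (x * y) - rotTilde c x - rotTilde c y := by
  rw [tauc, rotTilde_eq_add_snd hc (x * y), rotTilde_eq_add_snd hc x, rotTilde_eq_add_snd hc y,
    rotTilde_eq_add_snd hc (liftMul c _ _)]
  simp only [liftMul, LiftGroup.fst_mul, LiftGroup.snd_mul, zero_add]
  push_cast
  ring

theorem rotc_conj (hc : IsCircOrd c) (g a : G) : rotc c (g * a * g⁻¹) = rotc c a := by
  let t : LiftGroup hc := (g, 0)
  let x : LiftGroup hc := (a, 0)
  calc rotc c (g * a * g⁻¹) = rotTilde c (t * x * t⁻¹) := rotc_eq_rotTilde hc (t * x * t⁻¹)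
    _ = rotTilde c x := by rw [rotTilde_conj]
    _ = rotc c a := (rotc_eq_rotTilde hc x).symm

theorem tauc_conj (hc : IsCircOrd c) (g a b : G) :
    tauc c (g * a * g⁻¹) (g * b * g⁻¹) = tauc c a b := by
  let t : LiftGroup hc := (g, 0)
  let x : LiftGroup hc := (a, 0)
  let y : LiftGroup hc := (b, 0)
  calc tauc c (g * a * g⁻¹) (g * b * g⁻¹)
      = rotTilde c (t * x * t⁻¹ * (t * y * t⁻¹)) - rotTilde c (t * x * t⁻¹)
          - rotTilde c (t * y * t⁻¹) := tauc_eq_rotTilde hc (t * x * t⁻¹) (t * y * t⁻¹)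
    _ = rotTilde c (x * y) - rotTilde c x - rotTilde c y := by
      rw [conj_mul, rotTilde_conj, rotTilde_conj, rotTilde_conj]
    _ = tauc c a b := (tauc_eq_rotTilde hc x y).symm

def rightConj (d : G → G → G → ℤ) (g : G) : G → G → G → ℤ :=
  fun g₁ g₂ g₃ => d (g₁ * g⁻¹) (g₂ * g⁻¹) (g₃ * g⁻¹)

section RightConj

variable {d : G → G → G → ℤ}

theorem IsCircOrd.rightConj (hd : IsCircOrd d) (g : G) : IsCircOrd (rightConj d g) := by
  refine ⟨fun a b c' => ?_, fun a b c' => hd.2.1 _ _ _, fun a b c' e => hd.2.2.1 _ _ _ _,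
    fun h a b c' => ?_⟩
  · simp only [Paper.rightConj, hd.1, mul_left_inj]
  · simp only [Paper.rightConj, mul_assoc, hd.2.2.2]

theorem fc_rightConj (hd : IsCircOrd d) (g x y : G) :
    fc (rightConj d g) x y = fc d (g * x * g⁻¹) (g * y * g⁻¹) := by
  classical
  have htranslate :
      rightConj d g 1 x (x * y) = d 1 (g * x * g⁻¹) (g * x * g⁻¹ * (g * y * g⁻¹)) := by
    rw [rightConj, ← hd.2.2.2 g]
    simp only [mul_assoc, one_mul, mul_inv_cancel, inv_mul_cancel_left]
  simp only [fc, htranslate, conj_eq_one_iff]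

theorem liftPow_rightConj_snd (hd : IsCircOrd d) (g : G) (x : G × ℤ) (n : ℕ) :
    (liftPow (rightConj d g) x n).2 = (liftPow d (g * x.1 * g⁻¹, x.2) n).2 := by
  induction n with
  | zero => rfl
  | succ n ih =>
    simp only [liftPow, liftMul, ih, liftPow_fst, fc_rightConj hd, conj_pow]

theorem rotTilde_rightConj (hd : IsCircOrd d) (g : G) (x : G × ℤ) :
    rotTilde (rightConj d g) x = rotTilde d (g * x.1 * g⁻¹, x.2) := by
  simp only [rotTilde, liftFloor, liftPow_rightConj_snd hd]

theorem rotc_rightConj (hd : IsCircOrd d) (g a : G) : rotc (rightConj d g) a = rotc d a := by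
  rw [← rotc_conj hd g a, rotc, rotTilde_rightConj hd]
  rfl

theorem tauc_rightConj (hd : IsCircOrd d) (g a b : G) :
    tauc (rightConj d g) a b = tauc d a b := by
  rw [← tauc_conj hd g a b]
  simp only [tauc, rotTilde_rightConj hd, liftMul, fc_rightConj hd, conj_mul]

end RightConj

section Topology

theorem isClosed_setOf_isCircOrd : IsClosed {f : G → G → G → ℤ | IsCircOrd f} := by
  have hclosed {β : Type} [TopologicalSpace β] [DiscreteTopology β]
      {φ : (G → G → G → ℤ) → β} (hφ : Continuous φ) (p : β → Prop) :
      IsClosed {f | p (φ f)} :=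
    (isClosed_discrete {b | p b}).preimage hφ
  simp only [IsCircOrd, Set.ofPred_and, Set.ofPred_forall]
  refine .inter ?_ (.inter ?_ (.inter ?_ ?_)) <;>
    refine isClosed_iInter fun a => isClosed_iInter fun b => isClosed_iInter fun c => ?_
  · exact hclosed (φ := fun f => f a b c) (by fun_prop) (· = 0 ↔ _)
  · exact hclosed (φ := fun f => f a b c) (by fun_prop) (fun t => t = 0 ∨ t = 1 ∨ t = -1)
  · exact isClosed_iInter fun e =>
      hclosed (φ := fun f => f b c e - f a c e + f a b e - f a b c) (by fun_prop) (· = 0)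
  · exact isClosed_iInter fun e =>
      hclosed (φ := fun f => (f (a * b) (a * c) (a * e), f b c e)) (by fun_prop) fun t => t.1 = t.2

instance : CompactSpace (CircOrd G) := by
  refine isCompact_iff_compactSpace.mp ((isCompact_univ_pi fun _ => isCompact_univ_pi fun _ =>
    isCompact_univ_pi fun _ => (Set.toFinite {0, 1, -1}).isCompact).of_isClosed_subset
    isClosed_setOf_isCircOrd fun f hf => ?_)
  simpa [Set.mem_univ_pi] using hf.2.1

theorem continuous_circOrd_apply (a b c : G) : Continuous fun d : CircOrd G => d.1 a b c :=
  (by fun_prop : Continuous fun f : G → G → G → ℤ => f a b c).comp continuous_subtype_val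

open Classical in
theorem continuous_fc (u v : G) : Continuous fun d : CircOrd G => fc d.1 u v :=
  (continuous_of_discreteTopology (f := fun t : ℤ => if u = 1 ∨ v = 1 ∨ t = 1 then 0 else 1)).comp
    (continuous_circOrd_apply 1 u (u * v))

theorem continuous_liftPow_snd (x : G × ℤ) (n : ℕ) :
    Continuous fun d : CircOrd G => (liftPow d.1 x n).2 := by
  induction n with
  | zero => exact continuous_const
  | succ n ih =>
    simp only [liftPow, liftMul, liftPow_fst]
    exact (ih.add continuous_const).add (continuous_fc _ _)

theorem continuous_intCast_comp {X : Type*} [TopologicalSpace X] {f : X → ℤ} (hf : Continuous f) :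
    Continuous fun x => (f x : ℝ) :=
  (continuous_of_discreteTopology (f := ((↑) : ℤ → ℝ))).comp hf

theorem continuous_rotTilde (x : G × ℤ) : Continuous fun d : CircOrd G => rotTilde d.1 x := by
  refine continuous_of_abs_sub_le_div (C := 1)
    (fun n => (continuous_intCast_comp (continuous_liftPow_snd x n)).div_const (n : ℝ))
    fun n hn d => ?_
  obtain ⟨hlow, hup⟩ := (rotTilde_spec d.2 x).2 n hn
  rw [add_div] at hup
  rw [abs_le]
  constructor <;> linarith

theorem continuous_rotc (a : G) : Continuous fun d : CircOrd G => rotc d.1 a :=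
  (AddCircle.continuous_mk' 1).comp (continuous_rotTilde (a, 0))

theorem continuous_tauc (a b : G) : Continuous fun d : CircOrd G => tauc d.1 a b := by
  have hformula : (fun d : CircOrd G => tauc d.1 a b) = fun d => rotTilde d.1 (a * b, 0)
      + fc d.1 a b - rotTilde d.1 (a, 0) - rotTilde d.1 (b, 0) := funext fun d => by
    rw [tauc, rotTilde_eq_add_snd d.2 (liftMul _ _ _)]
    simp only [liftMul, zero_add]
  rw [hformula]
  exact (((continuous_rotTilde _).add (continuous_intCast_comp (continuous_fc a b))).sub
    (continuous_rotTilde _)).sub (continuous_rotTilde _)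

end Topology

def semiconjClass (c : G → G → G → ℤ) : Set (CircOrd G) :=
  {d | (∀ g : G, rotc d.1 g = rotc c g) ∧ (∀ g h : G, tauc d.1 g h = tauc c g h)}

theorem isCompact_semiconjClass (c : G → G → G → ℤ) : IsCompact (semiconjClass c) := by
  refine IsClosed.isCompact ?_
  simp only [semiconjClass, Set.ofPred_and, Set.ofPred_forall]
  exact (isClosed_iInter fun g => isClosed_eq (continuous_rotc g) continuous_const).inter
    (isClosed_iInter fun g => isClosed_iInter fun h =>
      isClosed_eq (continuous_tauc g h) continuous_const)

theorem rightConj_mem_semiconjClass {d : CircOrd G} (hd : d ∈ semiconjClass c) (g : G) :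
    (⟨rightConj d.1 g, d.2.rightConj g⟩ : CircOrd G) ∈ semiconjClass c :=
  ⟨fun a => (rotc_rightConj d.2 g a).trans (hd.1 a),
    fun a b => (tauc_rightConj d.2 g a b).trans (hd.2 a b)⟩

theorem stmt8_general (c : G → G → G → ℤ)
    (S : Set (CircOrd G))
    (hSdef : S = {d : CircOrd G |
      (∀ g : G, rotc d.1 g = rotc c g) ∧ (∀ g h : G, tauc d.1 g h = tauc c g h)}) :
    IsCompact S ∧
    ∀ d ∈ S, ∀ g : G,
      ∃ hcirc : IsCircOrd (fun g₁ g₂ g₃ : G => d.1 (g₁ * g⁻¹) (g₂ * g⁻¹) (g₃ * g⁻¹)),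
        (⟨fun g₁ g₂ g₃ : G => d.1 (g₁ * g⁻¹) (g₂ * g⁻¹) (g₃ * g⁻¹), hcirc⟩ : CircOrd G) ∈ S := by
  subst hSdef
  exact ⟨isCompact_semiconjClass c,
    fun d hd g => ⟨d.2.rightConj g, rightConj_mem_semiconjClass hd g⟩⟩

/-- Proposition 4.15: the semiconjugacy class
`S_c = {d ∈ CO(G) : rot_d = rot_c and τ_d = τ_c}` is a compact subset of `CO(G)` and is
invariant under the right conjugation action `(d·g)(g₁,g₂,g₃) = d(g₁g⁻¹,g₂g⁻¹,g₃g⁻¹)`. -/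
theorem stmt8 (c : G → G → G → ℤ) (hc : IsCircOrd c)
    (S : Set (CircOrd G))
    (hSdef : S = {d : CircOrd G |
      (∀ g : G, rotc d.1 g = rotc c g) ∧ (∀ g h : G, tauc d.1 g h = tauc c g h)}) :
    IsCompact S ∧
    ∀ d ∈ S, ∀ g : G,
      ∃ hcirc : IsCircOrd (fun g₁ g₂ g₃ : G => d.1 (g₁ * g⁻¹) (g₂ * g⁻¹) (g₃ * g⁻¹)),
        (⟨fun g₁ g₂ g₃ : G => d.1 (g₁ * g⁻¹) (g₂ * g⁻¹) (g₃ * g⁻¹), hcirc⟩ : CircOrd G) ∈ S :=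
  stmt8_general c S hSdef

end Paper
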